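/- Let n ∈ ℕ, β = 2n, and let (P,Q) and (P̃,Q̃) be two pairs of nonzero coprime polynomials in ℂ[X] with max(deg P, deg Q) = n = max(deg P̃, deg Q̃). Define u_{P,Q}(z) := √(2/(πβ)) · conj(P'(z)·Q(z) − P(z)·Q'(z)) / (|P(z)|² + |Q(z)|²). Then u_{P,Q}(z) = u_{P̃,Q̃}(z) for all z ∈ ℂ if and only if there exist a constant c > 0 and a constant matrix Λ ∈ SU(2) such that P̃ = c·(Λ₁₁·P + Λ₁₂·Q) and Q̃ = c·(Λ₂₁·P + Λ₂₂·Q). -/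

import Mathlib

open Polynomial

noncomputable def Wr (P Q : Polynomial ℂ) : Polynomial ℂ :=
  P.derivative * Q - P * Q.derivative

noncomputable def uPQ (β : ℝ) (P Q : Polynomial ℂ) (z : ℂ) : ℂ :=
  ((Real.sqrt (2 / (Real.pi * β)) : ℝ) : ℂ) *
    (starRingEnd ℂ) ((Wr P Q).eval z) /
    (((‖P.eval z‖ ^ 2 + ‖Q.eval z‖ ^ 2 : ℝ)) : ℂ)

/-!
Clearing the positive denominators, `u_{P,Q} = u_{P̃,Q̃}` says
`W(z) (|P̃(z)|² + |Q̃(z)|²) = W̃(z) (|P(z)|² + |Q(z)|²)` with `W = Wr P Q`, `W̃ = Wr P̃ Q̃`.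
Replacing `conj z` by an independent variable `y` (polarization) turns this into the polynomial
identity `W(x) K̃(x, y) = W̃(x) K(x, y)` for the kernels `K(x, y) = P(x) P̄(y) + Q(x) Q̄(y)`.
The coefficients of `K` in `y` span `⟨P, Q⟩`, so coprimality of `P, Q` forces `W ∣ W̃`;
symmetrically `W̃ ∣ W`, hence `W̃ = r W` and `K̃ = r K`. The latter puts `(P̃, Q̃) = M (P, Q)`
with `M* M = r • 1`, while `W̃ = (det M) W` gives `det M = r`; so `r > 0` and `M = √r Λ` with
`Λ ∈ SU(2)`. Conversely both identities hold for `M = c Λ` with `r = c²`.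
-/

open ComplexConjugate Polynomial.Bivariate

noncomputable section

lemma eq_zero_of_forall_eval_ofReal {p : ℂ[X]} (h : ∀ x : ℝ, p.eval (x : ℂ) = 0) : p = 0 :=
  p.eq_zero_of_infinite_isRoot (Set.infinite_of_injective_forall_mem Complex.ofReal_injective h)

lemma eq_zero_of_forall_evalEval_ofReal {F : ℂ[X][Y]} (h : ∀ x y : ℝ, F.evalEval (x : ℂ) y = 0) :
    F = 0 := by
  have hrow (x : ℝ) : F.map (evalRingHom (x : ℂ)) = 0 :=
    eq_zero_of_forall_eval_ofReal fun y => by rw [map_evalRingHom_eval]; exact h x y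
  ext k : 1
  refine eq_zero_of_forall_eval_ofReal fun x => ?_
  simpa using congrArg (coeff · k) (hrow x)

lemma evalEval_aevalAeval (x y : ℂ) (a b F : ℂ[X][Y]) :
    (aevalAeval a b F).evalEval x y = F.evalEval (a.evalEval x y) (b.evalEval x y) := by
  have key : (aevalAeval (R := ℂ) x y).comp (aevalAeval a b) =
      aevalAeval (a.evalEval x y) (b.evalEval x y) := by
    apply (aevalAevalEquiv ℂ ℂ).symm.injective
    simp [coe_aevalAeval_eq_evalEval]
  simpa only [AlgHom.comp_apply, coe_aevalAeval_eq_evalEval] using congrArg (· F) key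

lemma eq_zero_of_forall_evalEval_conj {F : ℂ[X][Y]} (h : ∀ z, F.evalEval z (conj z) = 0) :
    F = 0 := by
  -- `G(x, y) = F(x + iy, x - iy)` vanishes on `ℝ²`, and `F(x, y) = G((x + y) / 2, (x - y) / 2i)`
  have hG : aevalAeval (C X + CC Complex.I * Y) (C X - CC Complex.I * Y) F = 0 := by
    refine eq_zero_of_forall_evalEval_ofReal fun x y => ?_
    rw [evalEval_aevalAeval]
    simpa [evalEval_C, Complex.conj_ofReal, sub_eq_add_neg] using h (x + Complex.I * y)
  refine eq_zero_of_forall_evalEval_ofReal fun x y => ?_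
  have := congrArg (evalEval (((x : ℂ) + y) / 2) (((x : ℂ) - y) / (2 * Complex.I))) hG
  rw [evalEval_aevalAeval, evalEval_zero] at this
  convert this using 2 <;>
    simp only [evalEval_add, evalEval_sub, evalEval_mul, evalEval_C, evalEval_X, eval_C, eval_X] <;>
    field_simp <;> ring

lemma forall_evalEval_conj_eq_iff {F G : ℂ[X][Y]} :
    (∀ z, F.evalEval z (conj z) = G.evalEval z (conj z)) ↔ F = G := by
  refine ⟨fun h => sub_eq_zero.1 (eq_zero_of_forall_evalEval_conj fun z => ?_), fun h _ => h ▸ rfl⟩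
  rw [evalEval_sub, h, sub_self]

lemma linearIndependent_of_isCoprime {P Q : ℂ[X]} (hco : IsCoprime P Q)
    (hdeg : 0 < max P.natDegree Q.natDegree) : LinearIndependent ℂ ![P, Q] := by
  refine LinearIndependent.pair_iff.2 fun s t hst => ?_
  by_contra hne
  refine hdeg.ne' ?_
  rcases eq_or_ne t 0 with rfl | ht
  · have hP : P = 0 := by simpa [show s ≠ 0 by tauto] using hst
    subst hP
    simp [natDegree_eq_zero_of_isUnit (isCoprime_zero_left.1 hco)]
  · have hrel : C t * Q = C (-s) * P := by
      rw [← smul_eq_C_mul, ← smul_eq_C_mul]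
      linear_combination (norm := module) hst
    have hPQ : P ∣ Q := (isUnit_C.2 ht.isUnit).dvd_mul_left.1 (hrel ▸ dvd_mul_left P _)
    have hP0 := natDegree_eq_zero_of_isUnit (hco.isUnit_of_dvd' dvd_rfl hPQ)
    have hQ0 : Q.natDegree = 0 := by
      rw [← natDegree_C_mul ht, hrel]
      exact Nat.le_zero.1 (hP0 ▸ natDegree_C_mul_le _ _)
    simp [hP0, hQ0]

lemma sq_norm_eval_add_sq_norm_eval_pos {P Q : ℂ[X]} (hco : IsCoprime P Q) (z : ℂ) :
    0 < ‖P.eval z‖ ^ 2 + ‖Q.eval z‖ ^ 2 := by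
  obtain ⟨a, b, hab⟩ := hco
  have hz := congrArg (eval z) hab
  rcases eq_or_ne (P.eval z) 0 with hP | hP
  · have hQ : Q.eval z ≠ 0 := fun hQ => by simp [hP, hQ] at hz
    exact add_pos_of_nonneg_of_pos (by positivity) (pow_pos (norm_pos_iff.2 hQ) 2)
  · exact add_pos_of_pos_of_nonneg (pow_pos (norm_pos_iff.2 hP) 2) (by positivity)

lemma Wr_ne_zero {P Q : ℂ[X]} (hco : IsCoprime P Q) (hdeg : 0 < max P.natDegree Q.natDegree) :
    Wr P Q ≠ 0 := by
  rw [show Wr P Q = wronskian Q P by rw [Wr, wronskian]; ring, Ne,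
    hco.symm.wronskian_eq_zero_iff, derivative_eq_zero, derivative_eq_zero]
  rintro ⟨hQ, hP⟩
  simp [hP, hQ] at hdeg

lemma Wr_comb (P Q : ℂ[X]) (M : Matrix (Fin 2) (Fin 2) ℂ) :
    Wr (C (M 0 0) * P + C (M 0 1) * Q) (C (M 1 0) * P + C (M 1 1) * Q) = C M.det * Wr P Q := by
  simp only [Wr, Matrix.det_fin_two, derivative_add, derivative_C_mul, map_sub, map_mul]
  ring

/-- The bivariate polynomial `(x, y) ↦ A(x) * conj (B (conj y))`. -/
def outerConj (A B : ℂ[X]) : ℂ[X][Y] :=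
  C A * (B.map (starRingEnd ℂ)).map C

def pairKernel (P Q : ℂ[X]) : ℂ[X][Y] :=
  outerConj P P + outerConj Q Q

lemma evalEval_outerConj (A B : ℂ[X]) (z : ℂ) :
    (outerConj A B).evalEval z (conj z) = A.eval z * conj (B.eval z) := by
  rw [outerConj, evalEval_mul, evalEval_C, evalEval_map_C, eval_map, eval₂_at_apply]

lemma evalEval_pairKernel (P Q : ℂ[X]) (z : ℂ) :
    (pairKernel P Q).evalEval z (conj z) = ((‖P.eval z‖ ^ 2 + ‖Q.eval z‖ ^ 2 : ℝ) : ℂ) := by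
  simp only [pairKernel, evalEval_add, evalEval_outerConj, Complex.mul_conj,
    Complex.normSq_eq_norm_sq, Complex.ofReal_add]

lemma coeff_outerConj (A B : ℂ[X]) (j : ℕ) :
    (outerConj A B).coeff j = conj (B.coeff j) • A := by
  rw [outerConj, coeff_C_mul, coeff_map, coeff_map, smul_eq_C_mul, mul_comm]

lemma coeff_pairKernel (P Q : ℂ[X]) (j : ℕ) :
    (pairKernel P Q).coeff j = conj (P.coeff j) • P + conj (Q.coeff j) • Q := by
  rw [pairKernel, coeff_add, coeff_outerConj, coeff_outerConj]

section Independent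

variable {P Q : ℂ[X]}

lemma eq_zero_of_forall_mul_conj_coeff (hind : LinearIndependent ℂ ![P, Q]) {a b : ℂ}
    (h : ∀ j, a * conj (P.coeff j) + b * conj (Q.coeff j) = 0) : a = 0 ∧ b = 0 := by
  have hrel : conj a • P + conj b • Q = 0 := by
    ext j
    simpa using congrArg conj (h j)
  simpa using LinearIndependent.pair_iff.1 hind _ _ hrel

lemma eq_zero_of_outerConj_combination_eq_zero (hind : LinearIndependent ℂ ![P, Q]) {s t u v : ℂ}
    (h : CC s * outerConj P P + CC t * outerConj P Q + CC u * outerConj Q P +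
      CC v * outerConj Q Q = 0) :
    s = 0 ∧ t = 0 ∧ u = 0 ∧ v = 0 := by
  have hcoeff (j : ℕ) : (s * conj (P.coeff j) + t * conj (Q.coeff j)) • P +
      (u * conj (P.coeff j) + v * conj (Q.coeff j)) • Q = 0 := by
    have := congrArg (coeff · j) h
    simp only [coeff_add, coeff_C_mul, coeff_outerConj, coeff_zero, smul_eq_C_mul] at this
    simp only [smul_eq_C_mul, map_add, map_mul]
    linear_combination this
  have hPQ := fun j => LinearIndependent.pair_iff.1 hind _ _ (hcoeff j)
  obtain ⟨hs, ht⟩ := eq_zero_of_forall_mul_conj_coeff hind fun j => (hPQ j).1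
  obtain ⟨hu, hv⟩ := eq_zero_of_forall_mul_conj_coeff hind fun j => (hPQ j).2
  exact ⟨hs, ht, hu, hv⟩

lemma exists_coeff_det_ne_zero (hind : LinearIndependent ℂ ![P, Q]) :
    ∃ j k, P.coeff j * Q.coeff k - P.coeff k * Q.coeff j ≠ 0 := by
  by_contra! hdet
  obtain ⟨k, hk⟩ : ∃ k, Q.coeff k ≠ 0 := by
    by_contra! hQ
    exact hind.ne_zero 1 (by ext j; simpa using hQ j)
  refine hk (LinearIndependent.pair_iff.1 hind (Q.coeff k) (-P.coeff k) ?_).1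
  ext j
  simp only [coeff_add, coeff_smul, coeff_zero, smul_eq_mul]
  linear_combination hdet j k

lemma span_range_coeff_pairKernel (hind : LinearIndependent ℂ ![P, Q]) :
    Submodule.span ℂ (Set.range (pairKernel P Q).coeff) = Submodule.span ℂ {P, Q} := by
  apply le_antisymm
  · rw [Submodule.span_le]
    rintro _ ⟨j, rfl⟩
    exact Submodule.mem_span_pair.2 ⟨_, _, (coeff_pairKernel P Q j).symm⟩
  obtain ⟨j, k, hjk⟩ := exists_coeff_det_ne_zero hind
  set δ := conj (P.coeff j) * conj (Q.coeff k) - conj (P.coeff k) * conj (Q.coeff j) with hδdef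
  have hδ : δ ≠ 0 := by simpa [δ, ← map_mul, ← map_sub] using hjk
  have hv (i : ℕ) :
      (pairKernel P Q).coeff i ∈ Submodule.span ℂ (Set.range (pairKernel P Q).coeff) :=
    Submodule.subset_span ⟨i, rfl⟩
  rw [Submodule.span_le, Set.pair_subset_iff, SetLike.mem_coe, SetLike.mem_coe]
  -- Cramer's rule for the two coefficients `j`, `k`
  constructor
  · convert Submodule.smul_mem _ δ⁻¹ (sub_mem (Submodule.smul_mem _ (conj (Q.coeff k)) (hv j))
      (Submodule.smul_mem _ (conj (Q.coeff j)) (hv k))) using 1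
    rw [eq_inv_smul_iff₀ hδ, coeff_pairKernel, coeff_pairKernel, hδdef]
    module
  · convert Submodule.smul_mem _ δ⁻¹ (sub_mem (Submodule.smul_mem _ (conj (P.coeff j)) (hv k))
      (Submodule.smul_mem _ (conj (P.coeff k)) (hv j))) using 1
    rw [eq_inv_smul_iff₀ hδ, coeff_pairKernel, coeff_pairKernel, hδdef]
    module

end Independent

lemma pairKernel_comb (P Q : ℂ[X]) (M : Matrix (Fin 2) (Fin 2) ℂ) :
    pairKernel (C (M 0 0) * P + C (M 0 1) * Q) (C (M 1 0) * P + C (M 1 1) * Q) =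
      CC ((star M * M) 0 0) * outerConj P P + CC ((star M * M) 1 0) * outerConj P Q +
        CC ((star M * M) 0 1) * outerConj Q P + CC ((star M * M) 1 1) * outerConj Q Q := by
  simp only [pairKernel, outerConj, CC, Matrix.mul_apply, Fin.sum_univ_two, Matrix.star_apply,
    Complex.star_def, Polynomial.map_add, Polynomial.map_mul, map_C, map_add, map_mul]
  ring

lemma pairKernel_comb_eq_iff {P Q : ℂ[X]} (hind : LinearIndependent ℂ ![P, Q])
    (M : Matrix (Fin 2) (Fin 2) ℂ) (r : ℂ) :
    pairKernel (C (M 0 0) * P + C (M 0 1) * Q) (C (M 1 0) * P + C (M 1 1) * Q) =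
      CC r * pairKernel P Q ↔ star M * M = r • 1 := by
  rw [pairKernel_comb]
  constructor
  · intro h
    obtain ⟨h00, h10, h01, h11⟩ := eq_zero_of_outerConj_combination_eq_zero hind
      (s := (star M * M) 0 0 - r) (t := (star M * M) 1 0) (u := (star M * M) 0 1)
      (v := (star M * M) 1 1 - r)
      (by rw [pairKernel] at h; simp only [CC, map_sub]; linear_combination h)
    ext i j
    fin_cases i <;> fin_cases j <;> simp [sub_eq_zero.1 h00, sub_eq_zero.1 h11, h01, h10]
  · intro h
    simp only [h, pairKernel, CC, Matrix.smul_apply, Matrix.one_apply_eq, Matrix.one_apply_ne,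
      ne_eq, one_ne_zero, zero_ne_one, not_false_eq_true, smul_eq_mul, mul_one, mul_zero, map_zero,
      zero_mul, add_zero]
    ring

lemma dvd_mul_of_mem_span {D R x : ℂ[X]} {S : Set ℂ[X]} (hS : ∀ y ∈ S, D ∣ R * y)
    (hx : x ∈ Submodule.span ℂ S) : D ∣ R * x := by
  induction hx using Submodule.span_induction with
  | mem y hy => exact hS y hy
  | zero => simp
  | add y z _ _ hy hz => rw [mul_add]; exact dvd_add hy hz
  | smul a y _ hy => rw [smul_eq_C_mul, mul_left_comm]; exact dvd_mul_of_dvd_right hy _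

lemma dvd_of_C_mul_eq_C_mul_pairKernel {P Q D R : ℂ[X]} {F : ℂ[X][Y]} (hco : IsCoprime P Q)
    (hind : LinearIndependent ℂ ![P, Q]) (h : C D * F = C R * pairKernel P Q) : D ∣ R := by
  have hspan : ∀ x ∈ Submodule.span ℂ {P, Q}, D ∣ R * x := by
    rw [← span_range_coeff_pairKernel hind]
    refine fun x => dvd_mul_of_mem_span ?_
    rintro _ ⟨j, rfl⟩
    exact ⟨F.coeff j, by simpa only [coeff_C_mul] using (congrArg (coeff · j) h).symm⟩
  have hP := hspan P (Submodule.subset_span (by simp))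
  have hQ := hspan Q (Submodule.subset_span (by simp))
  obtain ⟨a, b, hab⟩ := hco
  have hR : R = a * (R * P) + b * (R * Q) := by linear_combination -R * hab
  rw [hR]
  exact dvd_add (dvd_mul_of_dvd_right hP a) (dvd_mul_of_dvd_right hQ b)

lemma exists_eq_C_mul_of_C_mul_pairKernel_eq {P Q P' Q' D R : ℂ[X]} (hco : IsCoprime P Q)
    (hind : LinearIndependent ℂ ![P, Q]) (hco' : IsCoprime P' Q')
    (hind' : LinearIndependent ℂ ![P', Q']) (hD : D ≠ 0)
    (h : C D * pairKernel P' Q' = C R * pairKernel P Q) :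
    ∃ r ≠ 0, R = C r * D ∧ pairKernel P' Q' = CC r * pairKernel P Q := by
  obtain ⟨u, hu⟩ := associated_of_dvd_dvd (dvd_of_C_mul_eq_C_mul_pairKernel hco hind h)
    (dvd_of_C_mul_eq_C_mul_pairKernel hco' hind' h.symm)
  obtain ⟨r, hr, hru⟩ := Polynomial.isUnit_iff.1 u.isUnit
  have hR : R = C r * D := by rw [← hu, hru, mul_comm]
  refine ⟨r, hr.ne_zero, hR, mul_left_cancel₀ (C_ne_zero.2 hD) ?_⟩
  rw [h, hR, map_mul]
  ring

lemma exists_matrix_of_pairKernel_eq {P Q P' Q' : ℂ[X]} (hind' : LinearIndependent ℂ ![P', Q'])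
    {r : ℂ} (h : pairKernel P' Q' = CC r * pairKernel P Q) :
    ∃ M : Matrix (Fin 2) (Fin 2) ℂ,
      P' = C (M 0 0) * P + C (M 0 1) * Q ∧ Q' = C (M 1 0) * P + C (M 1 1) * Q := by
  have hle : Submodule.span ℂ {P', Q'} ≤ Submodule.span ℂ {P, Q} := by
    rw [← span_range_coeff_pairKernel hind', h, Submodule.span_le]
    rintro _ ⟨j, rfl⟩
    rw [SetLike.mem_coe, coeff_C_mul, ← smul_eq_C_mul, coeff_pairKernel]
    exact Submodule.smul_mem _ _ (Submodule.mem_span_pair.2 ⟨_, _, rfl⟩)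
  obtain ⟨a, b, hab⟩ := Submodule.mem_span_pair.1 (hle (Submodule.subset_span (by simp)) :
    P' ∈ Submodule.span ℂ {P, Q})
  obtain ⟨c, d, hcd⟩ := Submodule.mem_span_pair.1 (hle (Submodule.subset_span (by simp)) :
    Q' ∈ Submodule.span ℂ {P, Q})
  refine ⟨!![a, b; c, d], ?_, ?_⟩ <;> simp [← hab, ← hcd, smul_eq_C_mul]

lemma exists_pos_smul_of_star_mul_self_eq {M : Matrix (Fin 2) (Fin 2) ℂ} {r : ℂ} (hr : r ≠ 0)
    (hM : star M * M = r • 1) (hdet : M.det = r) :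
    ∃ c : ℝ, 0 < c ∧ ∃ Λ ∈ Matrix.unitaryGroup (Fin 2) ℂ, Λ.det = 1 ∧ M = (c : ℂ) • Λ := by
  have hr_eq : r = ((Complex.normSq (M 0 0) + Complex.normSq (M 1 0) : ℝ) : ℂ) := by
    have := congrFun (congrFun hM 0) 0
    simp only [Matrix.mul_apply, Fin.sum_univ_two, Matrix.star_apply, Complex.star_def,
      Matrix.smul_apply, Matrix.one_apply_eq, smul_eq_mul, mul_one] at this
    rw [← this]
    push_cast
    rw [Complex.normSq_eq_conj_mul_self, Complex.normSq_eq_conj_mul_self]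
  set ρ := Complex.normSq (M 0 0) + Complex.normSq (M 1 0)
  have hρ : 0 < ρ := by
    refine lt_of_le_of_ne (add_nonneg (Complex.normSq_nonneg _) (Complex.normSq_nonneg _)) ?_
    intro h
    exact hr (by rw [hr_eq, ← h, Complex.ofReal_zero])
  set c := √ρ
  have hc : 0 < c := Real.sqrt_pos.2 hρ
  have hc2 : (c : ℂ) ^ 2 = r := by rw [hr_eq, ← Complex.ofReal_pow, Real.sq_sqrt hρ.le]
  have hc0 : (c : ℂ) ≠ 0 := Complex.ofReal_ne_zero.2 hc.ne'
  refine ⟨c, hc, (c : ℂ)⁻¹ • M, ?_, ?_, (smul_inv_smul₀ hc0 M).symm⟩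
  · rw [Matrix.mem_unitaryGroup_iff', star_smul, smul_mul_smul_comm, hM, smul_smul,
      Complex.star_def, map_inv₀, Complex.conj_ofReal, ← mul_inv, ← sq, hc2, inv_mul_cancel₀ hr,
      one_smul]
  · rw [Matrix.det_smul, hdet, Fintype.card_fin, inv_pow, hc2, inv_mul_cancel₀ hr]

lemma star_smul_mul_smul_eq_det_smul_one {Λ : Matrix (Fin 2) (Fin 2) ℂ}
    (hΛ : Λ ∈ Matrix.unitaryGroup (Fin 2) ℂ) (hdet : Λ.det = 1) (c : ℝ) :
    star ((c : ℂ) • Λ) * ((c : ℂ) • Λ) = ((c : ℂ) • Λ).det • 1 := by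
  rw [star_smul, smul_mul_smul_comm, Matrix.mem_unitaryGroup_iff'.1 hΛ, Matrix.det_smul, hdet,
    Fintype.card_fin, Complex.star_def, Complex.conj_ofReal, mul_one, sq]

lemma C_Wr_mul_pairKernel_comb {P Q : ℂ[X]} (hind : LinearIndependent ℂ ![P, Q])
    (M : Matrix (Fin 2) (Fin 2) ℂ) (hM : star M * M = M.det • 1) :
    C (Wr P Q) * pairKernel (C (M 0 0) * P + C (M 0 1) * Q) (C (M 1 0) * P + C (M 1 1) * Q) =
      C (Wr (C (M 0 0) * P + C (M 0 1) * Q) (C (M 1 0) * P + C (M 1 1) * Q)) *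
        pairKernel P Q := by
  rw [Wr_comb, (pairKernel_comb_eq_iff hind M M.det).2 hM, map_mul]
  ring

lemma exists_specialUnitary_of_C_Wr_mul_pairKernel_eq {P Q P' Q' : ℂ[X]}
    (hco : IsCoprime P Q) (hdeg : 0 < max P.natDegree Q.natDegree)
    (hco' : IsCoprime P' Q') (hdeg' : 0 < max P'.natDegree Q'.natDegree)
    (h : C (Wr P Q) * pairKernel P' Q' = C (Wr P' Q') * pairKernel P Q) :
    ∃ c : ℝ, 0 < c ∧ ∃ Λ ∈ Matrix.unitaryGroup (Fin 2) ℂ, Λ.det = 1 ∧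
      P' = C ((c : ℂ) * Λ 0 0) * P + C ((c : ℂ) * Λ 0 1) * Q ∧
      Q' = C ((c : ℂ) * Λ 1 0) * P + C ((c : ℂ) * Λ 1 1) * Q := by
  have hind := linearIndependent_of_isCoprime hco hdeg
  have hW := Wr_ne_zero hco hdeg
  obtain ⟨r, hr, hWr, hK⟩ := exists_eq_C_mul_of_C_mul_pairKernel_eq hco hind hco'
    (linearIndependent_of_isCoprime hco' hdeg') hW h
  obtain ⟨M, rfl, rfl⟩ := exists_matrix_of_pairKernel_eq
    (linearIndependent_of_isCoprime hco' hdeg') hK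
  have hdet : M.det = r := C_injective (mul_right_cancel₀ hW (by rw [← Wr_comb, hWr]))
  obtain ⟨c, hc, Λ, hΛ, hΛdet, rfl⟩ := exists_pos_smul_of_star_mul_self_eq hr
    ((pairKernel_comb_eq_iff hind M r).1 hK) hdet
  exact ⟨c, hc, Λ, hΛ, hΛdet, rfl, rfl⟩

lemma uPQ_eq_uPQ_iff {β : ℝ} (hβ : 0 < β) {P Q P' Q' : ℂ[X]} (hco : IsCoprime P Q)
    (hco' : IsCoprime P' Q') (z : ℂ) :
    uPQ β P Q z = uPQ β P' Q' z ↔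
      (C (Wr P Q) * pairKernel P' Q').evalEval z (conj z) =
        (C (Wr P' Q') * pairKernel P Q).evalEval z (conj z) := by
  have hs : ((√(2 / (Real.pi * β)) : ℝ) : ℂ) ≠ 0 :=
    Complex.ofReal_ne_zero.2 (Real.sqrt_pos.2 (by positivity)).ne'
  have hN {A B : ℂ[X]} (h : IsCoprime A B) : ((‖A.eval z‖ ^ 2 + ‖B.eval z‖ ^ 2 : ℝ) : ℂ) ≠ 0 :=
    Complex.ofReal_ne_zero.2 (sq_norm_eval_add_sq_norm_eval_pos h z).ne'
  rw [uPQ, uPQ, mul_div_assoc, mul_div_assoc, mul_right_inj' hs, div_eq_div_iff (hN hco) (hN hco'),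
    evalEval_mul, evalEval_mul, evalEval_C, evalEval_C, evalEval_pairKernel, evalEval_pairKernel,
    ← (starRingEnd ℂ).injective.eq_iff]
  simp only [map_mul, Complex.conj_conj, Complex.conj_ofReal]

end

theorem stmt7_general (n : ℕ) (hn : 0 < n) (β : ℝ) (hβ : β = 2 * n)
    (P Q Pt Qt : Polynomial ℂ)
    (hco : IsCoprime P Q)
    (hdeg : max P.natDegree Q.natDegree = n)
    (hcot : IsCoprime Pt Qt)
    (hdegt : max Pt.natDegree Qt.natDegree = n) :
    (∀ z : ℂ, uPQ β P Q z = uPQ β Pt Qt z) ↔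
    ∃ c : ℝ, 0 < c ∧ ∃ Λ : Matrix (Fin 2) (Fin 2) ℂ,
      Λ ∈ Matrix.unitaryGroup (Fin 2) ℂ ∧ Λ.det = 1 ∧
      Pt = Polynomial.C ((c : ℂ) * Λ 0 0) * P + Polynomial.C ((c : ℂ) * Λ 0 1) * Q ∧
      Qt = Polynomial.C ((c : ℂ) * Λ 1 0) * P + Polynomial.C ((c : ℂ) * Λ 1 1) * Q := by
  have hβ0 : 0 < β := by rw [hβ]; positivity
  have hdeg0 : 0 < max P.natDegree Q.natDegree := hdeg ▸ hn
  have hdegt0 : 0 < max Pt.natDegree Qt.natDegree := hdegt ▸ hn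
  simp only [uPQ_eq_uPQ_iff hβ0 hco hcot, forall_evalEval_conj_eq_iff]
  constructor
  · exact exists_specialUnitary_of_C_Wr_mul_pairKernel_eq hco hdeg0 hcot hdegt0
  · rintro ⟨c, -, Λ, hΛ, hΛdet, rfl, rfl⟩
    simpa only [Matrix.smul_apply, smul_eq_mul] using
      C_Wr_mul_pairKernel_comb (linearIndependent_of_isCoprime hco hdeg0) _
        (star_smul_mul_smul_eq_det_smul_one hΛ hΛdet c)

/-- for β = 2n and two pairs of nonzero coprime polynomials of maximal
degree n, u_{P,Q} = u_{P̃,Q̃} iff (P̃,Q̃) = c·Λ(P,Q) for some c > 0 and Λ ∈ SU(2). -/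
theorem stmt7 (n : ℕ) (hn : 0 < n) (β : ℝ) (hβ : β = 2 * n)
    (P Q Pt Qt : Polynomial ℂ)
    (hP : P ≠ 0) (hQ : Q ≠ 0) (hco : IsCoprime P Q)
    (hdeg : max P.natDegree Q.natDegree = n)
    (hPt : Pt ≠ 0) (hQt : Qt ≠ 0) (hcot : IsCoprime Pt Qt)
    (hdegt : max Pt.natDegree Qt.natDegree = n) :
    (∀ z : ℂ, uPQ β P Q z = uPQ β Pt Qt z) ↔
    ∃ c : ℝ, 0 < c ∧ ∃ Λ : Matrix (Fin 2) (Fin 2) ℂ,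
      Λ ∈ Matrix.unitaryGroup (Fin 2) ℂ ∧ Λ.det = 1 ∧
      Pt = Polynomial.C ((c : ℂ) * Λ 0 0) * P + Polynomial.C ((c : ℂ) * Λ 0 1) * Q ∧
      Qt = Polynomial.C ((c : ℂ) * Λ 1 0) * P + Polynomial.C ((c : ℂ) * Λ 1 1) * Q :=
  stmt7_general n hn β hβ P Q Pt Qt hco hdeg hcot hdegt
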